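/- arXiv:1608.00015 — 5 statements merged into one kernel-verified Lean document; each statement's English description precedes it below -/
import Mathlib

section
/- Let C be a field and let a_1, …, a_r ∈ Cˣ be multiplicatively independent. If a polynomial f ∈ C[x_1, …, x_r] satisfies f(a_1^m, …, a_r^m) = 0 for every nonnegative integer m, then f is the zero polynomial. Consequently, the set {(a_1^m, …, a_r^m) : m ∈ ℕ} is Zariski-dense in C^r. -/
/-- The Zariski topology on affine space `C^r`: the closed sets are the common zero loci of
families of polynomials in `r` variables (the topology is generated by the basic open sets
`{x | f(x) ≠ 0}`). -/
def affineZariskiTopology (r : ℕ) (C : Type*) [CommRing C] : TopologicalSpace (Fin r → C) :=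
  TopologicalSpace.generateFrom
    {U | ∃ f : MvPolynomial (Fin r) C, U = {x | MvPolynomial.eval x f ≠ 0}}

/-- If `a_1, …, a_r ∈ Cˣ` are multiplicatively independent, then any polynomial vanishing at
all points `(a_1^m, …, a_r^m)`, `m ∈ ℕ`, is the zero polynomial; consequently the set of such
points is Zariski-dense in `C^r`. -/
theorem multiplicativelyIndependent_zariskiDense {C : Type*} [Field C] (r : ℕ)
    (a : Fin r → Cˣ)
    (ha : ∀ m : Fin r → ℤ, (∏ i, a i ^ m i) = 1 → m = 0) :
    (∀ f : MvPolynomial (Fin r) C,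
        (∀ m : ℕ, MvPolynomial.eval (fun i => ((a i : C)) ^ m) f = 0) → f = 0) ∧
    @closure _ (affineZariskiTopology r C)
        {x : Fin r → C | ∃ m : ℕ, x = fun i => ((a i : C)) ^ m} = Set.univ := by
  classical
  -- the unit attached to a multi-exponent
  set b : (Fin r →₀ ℕ) → Cˣ := fun d => ∏ i, a i ^ d i with hb
  -- the associated character `Multiplicative ℕ →* C`
  set χ : (Fin r →₀ ℕ) → (Multiplicative ℕ →* C) :=
    fun d => (Units.coeHom C).comp (powersHom Cˣ (b d)) with hχ
  have hχinj : Function.Injective χ := by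
    intro d d' h
    have h1 : (b d : C) = (b d' : C) := by
      have := congrArg (fun φ : Multiplicative ℕ →* C => φ (Multiplicative.ofAdd 1)) h
      simpa [hχ, powersHom_apply] using this
    have h2 : b d = b d' := Units.ext h1
    have h3 : (∏ i, a i ^ ((d i : ℤ) - (d' i : ℤ))) = 1 := by
      have : (∏ i, a i ^ ((d i : ℤ) - (d' i : ℤ)))
          = b d * (b d')⁻¹ := by
        simp [hb, zpow_sub, zpow_natCast, Finset.prod_mul_distrib]
      rw [this, h2, mul_inv_cancel]
    have h4 := ha _ h3
    ext i
    have := congrFun h4 i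
    simp only [Pi.zero_apply, sub_eq_zero] at this
    exact_mod_cast this
  have key : ∀ f : MvPolynomial (Fin r) C,
      (∀ m : ℕ, MvPolynomial.eval (fun i => ((a i : C)) ^ m) f = 0) → f = 0 := by
    intro f hf
    have li : LinearIndependent C (fun d : (Fin r →₀ ℕ) => ⇑(χ d)) :=
      (linearIndependent_monoidHom (Multiplicative ℕ) C).comp χ hχinj
    have hsum : ∑ d ∈ f.support, MvPolynomial.coeff d f • ⇑(χ d) = 0 := by
      funext m
      have hm := hf (Multiplicative.toAdd m)
      rw [MvPolynomial.eval_eq'] at hm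
      have : ∑ d ∈ f.support, MvPolynomial.coeff d f * (χ d) m
          = ∑ d ∈ f.support, MvPolynomial.coeff d f *
              ∏ i, ((a i : C) ^ (Multiplicative.toAdd m)) ^ d i := by
        refine Finset.sum_congr rfl fun d _ => ?_
        congr 1
        simp only [hχ, MonoidHom.comp_apply, powersHom_apply, Units.coeHom_apply, hb]
        push_cast [← Finset.prod_pow]
        exact Finset.prod_congr rfl fun i _ => by
          rw [← pow_mul, ← pow_mul, mul_comm]
      simp only [Finset.sum_apply, Pi.smul_apply, smul_eq_mul, Pi.zero_apply]
      rw [this, hm]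
    have hz := linearIndependent_iff'.mp li f.support (fun d => MvPolynomial.coeff d f) hsum
    ext d
    by_cases hd : d ∈ f.support
    · simpa using hz d hd
    · simpa using MvPolynomial.notMem_support_iff.mp hd
  refine ⟨key, ?_⟩
  letI := affineZariskiTopology r C
  have hB : TopologicalSpace.IsTopologicalBasis
      {U | ∃ f : MvPolynomial (Fin r) C, U = {x : Fin r → C | MvPolynomial.eval x f ≠ 0}} := by
    refine ⟨?_, ?_, rfl⟩
    · rintro t₁ ⟨f, rfl⟩ t₂ ⟨g, rfl⟩ x ⟨hx₁, hx₂⟩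
      refine ⟨{x | MvPolynomial.eval x (f * g) ≠ 0}, ⟨f * g, rfl⟩, ?_, ?_⟩
      · simp only [Set.mem_setOf_eq, map_mul]
        exact mul_ne_zero hx₁ hx₂
      · intro y hy
        simp only [Set.mem_setOf_eq, map_mul] at hy ⊢
        exact ⟨left_ne_zero_of_mul hy, right_ne_zero_of_mul hy⟩
    · refine Set.eq_univ_of_forall fun x => ?_
      exact ⟨{y : Fin r → C | MvPolynomial.eval y (1 : MvPolynomial (Fin r) C) ≠ 0},
        ⟨1, rfl⟩, by simp⟩
  rw [← dense_iff_closure_eq, hB.dense_iff]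
  rintro o ⟨f, rfl⟩ ⟨x, hx⟩
  by_cases hfa : ∃ m : ℕ, MvPolynomial.eval (fun i => ((a i : C)) ^ m) f ≠ 0
  · obtain ⟨m, hm⟩ := hfa
    exact ⟨_, hm, ⟨m, rfl⟩⟩
  · push_neg at hfa
    exact absurd (key f hfa ▸ hx) (by simp)
end

section
/- Let C be a field, n a positive integer, and h_1, h_2 ∈ GL_n(C) with h_1^t = I_n and h_2^p = I_n for positive integers t, p. Suppose the commutator h_1 h_2 h_1^{-1} h_2^{-1} equals α·I_n for some scalar α ∈ Cˣ. Then α^d = 1, where d = gcd(n, t, p); in particular, if gcd(n, t, p) = 1 then h_1 and h_2 commute. -/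
/-!
Write `z = ⁅h₁, h₂⁆`, the scalar matrix `α • 1`. Being central, `z` satisfies `h₁ h₂ h₁⁻¹ = z h₂`,
and raising this to the `p`-th power gives `h₁ h₂ᵖ h₁⁻¹ = zᵖ h₂ᵖ`, so `zᵖ = 1`; symmetrically
`zᵗ = 1`. Taking determinants, `αⁿ = det z = 1`. Hence `α` is killed by `gcd(n, t, p)`.
-/

open scoped commutatorElement

section CentralCommutator

variable {G : Type*} [Group G] {a b : G}

theorem commutatorElement_pow_eq_one_of_pow_right_eq_one (hz : ⁅a, b⁆ ∈ Subgroup.center G)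
    {k : ℕ} (hb : b ^ k = 1) : ⁅a, b⁆ ^ k = 1 := by
  have hconj : a * b * a⁻¹ = ⁅a, b⁆ * b := by simp [commutatorElement_def, mul_assoc]
  have hcomm : Commute ⁅a, b⁆ b := Subgroup.mem_center_iff.mp hz b |>.symm
  calc ⁅a, b⁆ ^ k = ⁅a, b⁆ ^ k * b ^ k := by rw [hb, mul_one]
    _ = (a * b * a⁻¹) ^ k := by rw [hconj, hcomm.mul_pow]
    _ = 1 := by rw [conj_pow, hb, mul_one, mul_inv_cancel]

theorem commutatorElement_pow_eq_one_of_pow_left_eq_one (hz : ⁅a, b⁆ ∈ Subgroup.center G)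
    {k : ℕ} (ha : a ^ k = 1) : ⁅a, b⁆ ^ k = 1 := by
  have hz' : ⁅b, a⁆ ∈ Subgroup.center G := commutatorElement_inv a b ▸ Subgroup.inv_mem _ hz
  have := commutatorElement_pow_eq_one_of_pow_right_eq_one hz' ha
  rwa [← commutatorElement_inv, inv_pow, inv_eq_one] at this

end CentralCommutator

namespace Matrix

variable {n R : Type*} [Fintype n] [DecidableEq n] [CommRing R]

theorem mem_center_units_of_val_eq_smul_one {u : (Matrix n n R)ˣ} {a : R}
    (hu : (u : Matrix n n R) = a • 1) :
    u ∈ Subgroup.center (Matrix n n R)ˣ :=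
  Subgroup.mem_center_iff.mpr fun v => Units.ext <| by
    simp only [Units.val_mul, hu, smul_one_mul, mul_smul_one]

theorem pow_eq_one_of_val_eq_smul_one [Nonempty n] {u : (Matrix n n R)ˣ} {a : R}
    (hu : (u : Matrix n n R) = a • 1) {k : ℕ} (huk : u ^ k = 1) : a ^ k = 1 := by
  have : (a • (1 : Matrix n n R)) ^ k = 1 := by
    rw [← hu, ← Units.val_pow_eq_pow_val, huk, Units.val_one]
  rw [smul_pow, one_pow] at this
  simpa using congrFun₂ this (Classical.arbitrary n) (Classical.arbitrary n)

theorem pow_card_eq_one_of_commutatorElement_eq_smul_one {g h : (Matrix n n R)ˣ} {a : R}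
    (hgh : ((⁅g, h⁆ : (Matrix n n R)ˣ) : Matrix n n R) = a • 1) :
    a ^ Fintype.card n = 1 := by
  have hdet := congrArg Units.val (map_commutatorElement (Units.map detMonoidHom) g h)
  rwa [commutatorElement_eq_one_iff_commute.mpr (Commute.all (S := Rˣ) _ _), Units.val_one,
    Units.coe_map, coe_detMonoidHom, hgh, det_smul, det_one, mul_one] at hdet

end Matrix

theorem scalar_commutator_pow_gcd_general {C : Type*} [Field C] (n t p : ℕ)
    (hn : 0 < n)
    (h1 h2 : (Matrix (Fin n) (Fin n) C)ˣ)
    (h1t : h1 ^ t = 1) (h2p : h2 ^ p = 1) (α : Cˣ)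
    (hc : ((h1 * h2 * h1⁻¹ * h2⁻¹ : (Matrix (Fin n) (Fin n) C)ˣ) :
        Matrix (Fin n) (Fin n) C) = (α : C) • (1 : Matrix (Fin n) (Fin n) C)) :
    (α : C) ^ (Nat.gcd n (Nat.gcd t p)) = 1 ∧
      (Nat.gcd n (Nat.gcd t p) = 1 → h1 * h2 = h2 * h1) := by
  have : Nonempty (Fin n) := ⟨⟨0, hn⟩⟩
  rw [← commutatorElement_def] at hc
  have hcenter := Matrix.mem_center_units_of_val_eq_smul_one hc
  have hαn : (α : C) ^ n = 1 := by
    simpa using Matrix.pow_card_eq_one_of_commutatorElement_eq_smul_one hc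
  have hαt := Matrix.pow_eq_one_of_val_eq_smul_one hc
    (commutatorElement_pow_eq_one_of_pow_left_eq_one hcenter h1t)
  have hαp := Matrix.pow_eq_one_of_val_eq_smul_one hc
    (commutatorElement_pow_eq_one_of_pow_right_eq_one hcenter h2p)
  have hα : (α : C) ^ Nat.gcd n (Nat.gcd t p) = 1 :=
    pow_gcd_eq_one.mpr ⟨hαn, pow_gcd_eq_one.mpr ⟨hαt, hαp⟩⟩
  refine ⟨hα, fun hd => ?_⟩
  rw [hd, pow_one] at hα
  rw [← commutatorElement_eq_one_iff_mul_comm]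
  exact Units.ext (by rw [hc, hα, one_smul, Units.val_one])

/-- If `h_1, h_2 ∈ GL_n(C)` satisfy `h_1^t = I`, `h_2^p = I` and their commutator is the
scalar matrix `α·I_n`, then `α^d = 1` where `d = gcd(n, t, p)`; in particular, if
`gcd(n, t, p) = 1` then `h_1` and `h_2` commute. -/
theorem scalar_commutator_pow_gcd {C : Type*} [Field C] (n t p : ℕ)
    (hn : 0 < n) (ht : 0 < t) (hp : 0 < p)
    (h1 h2 : (Matrix (Fin n) (Fin n) C)ˣ)
    (h1t : h1 ^ t = 1) (h2p : h2 ^ p = 1) (α : Cˣ)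
    (hc : ((h1 * h2 * h1⁻¹ * h2⁻¹ : (Matrix (Fin n) (Fin n) C)ˣ) :
        Matrix (Fin n) (Fin n) C) = (α : C) • (1 : Matrix (Fin n) (Fin n) C)) :
    (α : C) ^ (Nat.gcd n (Nat.gcd t p)) = 1 ∧
      (Nat.gcd n (Nat.gcd t p) = 1 → h1 * h2 = h2 * h1) :=
  scalar_commutator_pow_gcd_general n t p hn h1 h2 h1t h2p α hc
end

section
/- Let C be a field and let H be a subgroup of GL_n(C), equipped with the subspace topology induced by the Zariski topology on M_n(C). Suppose that every commutator g h g^{-1} h^{-1} of elements g, h ∈ H is a scalar matrix. Then every element of the connected component of the identity of H commutes with every element of H; that is, the identity component of H is contained in the center of H. -/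
/-!
Fix `h ∈ H`. For `u ∈ H` the commutator hypothesis gives `u h = α • (h u)` for a scalar `α`,
and taking determinants shows `α ^ n = 1`; since `h u` is invertible, `α` is determined by `u`.
Thus `H` is covered by the finitely many Zariski-closed sets `{A | A h = α • (h A)}` with
`α ^ n = 1`, which are pairwise disjoint on `H`. The one with `α = 1` is then clopen in `H`
and contains `1`, hence contains the identity component.
-/

/-- The Zariski topology on `n × n` matrices over a commutative ring `C`. -/
def matrixZariskiTopology (n : ℕ) (C : Type*) [CommRing C] :
    TopologicalSpace (Matrix (Fin n) (Fin n) C) :=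
  TopologicalSpace.generateFrom
    {U | ∃ f : MvPolynomial (Fin n × Fin n) C,
      U = {A | MvPolynomial.eval (fun p => A p.1 p.2) f ≠ 0}}

open scoped Topology

theorem connectedComponentIn_subset_of_finset_closed_cover {X ι : Type*} [TopologicalSpace X]
    {s : Set X} {F : ι → Set X} {t : Finset ι} (hF : ∀ i ∈ t, IsClosed (F i))
    (hcover : s ⊆ ⋃ i ∈ t, F i) (hdisj : ∀ x ∈ s, ∀ i j, x ∈ F i → x ∈ F j → i = j)
    {x : X} {i : ι} (hi : i ∈ t) (hx : x ∈ F i) : connectedComponentIn s x ⊆ F i := by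
  classical
  by_cases hxs : x ∈ s
  swap
  · simp [connectedComponentIn_eq_empty hxs]
  have hsub := connectedComponentIn_subset s x
  have hrest : ∀ y ∈ s, ∀ j ∈ t.erase i, y ∈ F i → y ∉ F j := fun y hy j hj hyi hyj =>
    Finset.ne_of_mem_erase hj (hdisj y hy j i hyj hyi)
  have hsplit : connectedComponentIn s x ⊆ F i ∪ ⋃ j ∈ t.erase i, F j := by
    intro y hy
    obtain ⟨j, hj, hyj⟩ := Set.mem_iUnion₂.mp (hcover (hsub hy))
    by_cases hji : j = i
    · exact Or.inl (hji ▸ hyj)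
    · exact Or.inr (Set.mem_biUnion (Finset.mem_erase.mpr ⟨hji, hj⟩) hyj)
  have hdisj' : connectedComponentIn s x ∩ (F i ∩ ⋃ j ∈ t.erase i, F j) = ∅ := by
    refine Set.eq_empty_of_forall_notMem fun y ⟨hy, hyi, hyv⟩ => ?_
    obtain ⟨j, hj, hyj⟩ := Set.mem_iUnion₂.mp hyv
    exact hrest y (hsub hy) j hj hyi hyj
  obtain h | h := isPreconnected_iff_subset_of_disjoint_closed.mp
    isPreconnected_connectedComponentIn (F i) (⋃ j ∈ t.erase i, F j) (hF i hi)
    (isClosed_biUnion_finset fun j hj => hF j (Finset.mem_of_mem_erase hj)) hsplit hdisj'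
  · exact h
  · obtain ⟨j, hj, hxj⟩ := Set.mem_iUnion₂.mp (h (mem_connectedComponentIn hxs))
    exact absurd hxj (hrest x hxs j hj hx)

theorem Units.val_mul_eq_smul_mul_of_commutator_eq_smul_one {R A : Type*} [CommSemiring R]
    [Semiring A] [Algebra R A] {g h : Aˣ} {α : R} (hα : ((g * h * g⁻¹ * h⁻¹ : Aˣ) : A) = α • 1) :
    (g : A) * h = α • ((h : A) * g) := by
  have : g * h = g * h * g⁻¹ * h⁻¹ * (h * g) := by group
  rw [← Units.val_mul, this, Units.val_mul, hα, Units.val_mul, smul_one_mul]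

theorem Matrix.pow_card_eq_one_of_mul_eq_smul_mul {m R : Type*} [Fintype m] [DecidableEq m]
    [CommRing R] {A B : Matrix m m R} (hAB : IsUnit (A * B).det) {α : R}
    (h : A * B = α • (B * A)) : α ^ Fintype.card m = 1 := by
  have hdet : (A * B).det = α ^ Fintype.card m * (A * B).det :=
    calc (A * B).det = (α • (B * A)).det := congrArg det h
      _ = α ^ Fintype.card m * (A * B).det := by rw [det_smul, det_mul_comm]
  exact hAB.mul_eq_right.mp hdet.symm

namespace matrixZariskiTopology

variable {n : ℕ} {C : Type*} [CommRing C]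

theorem isClosed_setOf_forall_eval_eq_zero {ι : Type*} (f : ι → MvPolynomial (Fin n × Fin n) C) :
    IsClosed[matrixZariskiTopology n C]
      {A | ∀ i, MvPolynomial.eval (fun p => A p.1 p.2) (f i) = 0} := by
  let := matrixZariskiTopology n C
  rw [← isOpen_compl_iff, Set.ofPred_forall, Set.compl_iInter]
  exact isOpen_iUnion fun i => TopologicalSpace.isOpen_generateFrom_of_mem ⟨f i, rfl⟩

theorem exists_eval_eq_linearMap (ℓ : Matrix (Fin n) (Fin n) C →ₗ[C] C) :
    ∃ f : MvPolynomial (Fin n × Fin n) C, ∀ A, MvPolynomial.eval (fun p => A p.1 p.2) f = ℓ A := by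
  refine ⟨∑ p, MvPolynomial.C (ℓ (Matrix.single p.1 p.2 1)) * MvPolynomial.X p, fun A => ?_⟩
  conv_rhs => rw [Matrix.matrix_eq_sum_single A]
  simp only [map_sum, map_mul, MvPolynomial.eval_C, MvPolynomial.eval_X, Fintype.sum_prod_type]
  refine Finset.sum_congr rfl fun i _ => Finset.sum_congr rfl fun j _ => ?_
  rw [mul_comm, ← smul_eq_mul, ← map_smul, Matrix.smul_single, smul_eq_mul, mul_one]

theorem isClosed_ker {m k : Type*} (L : Matrix (Fin n) (Fin n) C →ₗ[C] Matrix m k C) :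
    IsClosed[matrixZariskiTopology n C] (LinearMap.ker L : Set (Matrix (Fin n) (Fin n) C)) := by
  choose f hf using fun p : m × k =>
    exists_eval_eq_linearMap (Matrix.entryLinearMap C C p.1 p.2 ∘ₗ L)
  convert isClosed_setOf_forall_eval_eq_zero f
  ext A
  simp [hf, ← Matrix.ext_iff]

theorem isClosed_setOf_mul_eq_smul_mul (M : Matrix (Fin n) (Fin n) C) (α : C) :
    IsClosed[matrixZariskiTopology n C] {A | A * M = α • (M * A)} := by
  convert isClosed_ker (LinearMap.mulRight C M - α • LinearMap.mulLeft C M)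
  ext A
  simp [sub_eq_zero]

end matrixZariskiTopology

/-- If every commutator of elements of a subgroup `H ≤ GL_n(C)` is a scalar matrix, then
every element of the identity component of `H` (for the subspace topology induced by the
Zariski topology on `M_n(C)`) commutes with every element of `H`. -/
theorem identityComponent_central_of_commutator_scalar {C : Type*} [Field C] (n : ℕ)
    (H : Subgroup (Matrix (Fin n) (Fin n) C)ˣ)
    (hcomm : ∀ g ∈ H, ∀ h ∈ H, ∃ α : Cˣ,
      ((g * h * g⁻¹ * h⁻¹ : (Matrix (Fin n) (Fin n) C)ˣ) : Matrix (Fin n) (Fin n) C) =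
        (α : C) • (1 : Matrix (Fin n) (Fin n) C)) :
    ∀ g ∈ @connectedComponentIn _ (matrixZariskiTopology n C)
        {M : Matrix (Fin n) (Fin n) C | ∃ u ∈ H, (u : Matrix (Fin n) (Fin n) C) = M}
        (1 : Matrix (Fin n) (Fin n) C),
      ∀ M ∈ {M : Matrix (Fin n) (Fin n) C | ∃ u ∈ H, (u : Matrix (Fin n) (Fin n) C) = M},
        g * M = M * g := by
  set S := {M : Matrix (Fin n) (Fin n) C | ∃ u ∈ H, (u : Matrix (Fin n) (Fin n) C) = M}
  rintro g hg _ ⟨h, hh, rfl⟩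
  rcases Nat.eq_zero_or_pos n with rfl | hn
  · exact Subsingleton.elim _ _
  have : NeZero n := ⟨hn.ne'⟩
  let := matrixZariskiTopology n C
  let F : C → Set (Matrix (Fin n) (Fin n) C) := fun α => {A | A * h = α • (h * A)}
  have hcover : S ⊆ ⋃ α ∈ Polynomial.nthRootsFinset n (1 : C), F α := by
    rintro _ ⟨u, hu, rfl⟩
    obtain ⟨α, hα⟩ := hcomm u hu h hh
    have hrel := Units.val_mul_eq_smul_mul_of_commutator_eq_smul_one hα
    have hroot := Matrix.pow_card_eq_one_of_mul_eq_smul_mul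
      ((Matrix.isUnit_iff_isUnit_det _).mp (u * h).isUnit) hrel
    exact Set.mem_biUnion ((Polynomial.mem_nthRootsFinset hn 1).2 (by simpa using hroot)) hrel
  have hdisj : ∀ A ∈ S, ∀ α β, A ∈ F α → A ∈ F β → α = β := by
    rintro _ ⟨u, -, rfl⟩ α β hα hβ
    exact smul_left_injective C (h * u).ne_zero (hα.symm.trans hβ)
  have hg1 : g ∈ F 1 :=
    connectedComponentIn_subset_of_finset_closed_cover
      (fun α _ => matrixZariskiTopology.isClosed_setOf_mul_eq_smul_mul _ α) hcover hdisj
      ((Polynomial.mem_nthRootsFinset hn 1).2 (one_pow n)) (by simp) hg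
  simpa [F] using hg1
end

section
/- Let C be a field of characteristic zero and let A ∈ GL_n(C) have multiplicative Jordan decomposition A = S·U = U·S with S diagonalizable and U unipotent. Let σ be the C-algebra automorphism of C(x) with σ(x) = x + 1, applied to matrices entrywise. Then there exists T ∈ GL_n(C(x)) such that σ(T)·A·T^{-1} = S; that is, the shift-difference system σ(Y) = AY is gauge-equivalent over C(x) to the system σ(Y) = SY given by the semisimple part of A. -/
open Finset

section aux
variable {C : Type*} [Field C] [CharZero C]

/-- The generalized binomial coefficient `t(t-1)⋯(t-k+1)/k!` in `C(x)`. -/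
noncomputable def shiftBico (t : RatFunc C) (k : ℕ) : RatFunc C :=
  (k.factorial : RatFunc C)⁻¹ * ∏ i ∈ Finset.range k, (t - i)

lemma shiftBico_zero (t : RatFunc C) : shiftBico t 0 = 1 := by
  simp [shiftBico]

lemma shiftBico_pascal (t : RatFunc C) (k : ℕ) :
    shiftBico t (k + 1) = shiftBico (t - 1) (k + 1) + shiftBico (t - 1) k := by
  haveI : CharZero (RatFunc C) :=
    charZero_of_injective_algebraMap (algebraMap C (RatFunc C)).injective
  have h1 : ∏ i ∈ Finset.range (k + 1), (t - (i : RatFunc C))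
      = t * ∏ i ∈ Finset.range k, (t - 1 - i) := by
    rw [Finset.prod_range_succ']
    simp only [Nat.cast_zero, sub_zero]
    rw [mul_comm]
    congr 1
    refine Finset.prod_congr rfl fun i _ => ?_
    push_cast; ring
  have h2 : ∏ i ∈ Finset.range (k + 1), (t - 1 - (i : RatFunc C))
      = (∏ i ∈ Finset.range k, (t - 1 - i)) * (t - 1 - k) := Finset.prod_range_succ _ _
  have hk : ((k.factorial : RatFunc C)) ≠ 0 := Nat.cast_ne_zero.mpr k.factorial_ne_zero
  have hk1 : ((k+1).factorial : RatFunc C) ≠ 0 := Nat.cast_ne_zero.mpr (k+1).factorial_ne_zero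
  rw [shiftBico, shiftBico, shiftBico, h1, h2]
  rw [Nat.factorial_succ] at hk1 ⊢
  push_cast at hk1 ⊢
  field_simp
  ring

lemma shiftBico_map (σ : RatFunc C →ₐ[C] RatFunc C) (t : RatFunc C) (k : ℕ) :
    σ (shiftBico t k) = shiftBico (σ t) k := by
  simp only [shiftBico, map_mul, map_inv₀, map_natCast, map_prod, map_sub]

end aux

/-- Let `A = S·U = U·S` be the multiplicative Jordan decomposition of `A ∈ GL_n(C)` with `S`
diagonalizable and `U` unipotent, and let `σ` be the shift automorphism of `C(x)` with
`σ(x) = x + 1`.  Then the system `σ(Y) = AY` is gauge-equivalent over `C(x)` to the system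
`σ(Y) = SY`: there is `T ∈ GL_n(C(x))` with `σ(T)·A·T⁻¹ = S`. -/
theorem shift_gauge_equiv_semisimple_part {C : Type*} [Field C] [CharZero C]
    (n : ℕ) (A S U : (Matrix (Fin n) (Fin n) C)ˣ)
    (hSU : A = S * U) (hUS : A = U * S)
    (hdiag : ∃ P : (Matrix (Fin n) (Fin n) C)ˣ, ∃ d : Fin n → C,
      (P : Matrix (Fin n) (Fin n) C) * (S : Matrix (Fin n) (Fin n) C) *
        ((P⁻¹ : (Matrix (Fin n) (Fin n) C)ˣ) : Matrix (Fin n) (Fin n) C) = Matrix.diagonal d)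
    (hunip : ((U : Matrix (Fin n) (Fin n) C) - 1) ^ n = 0)
    (σ : RatFunc C →ₐ[C] RatFunc C) (hσ : σ RatFunc.X = RatFunc.X + 1) :
    ∃ T : (Matrix (Fin n) (Fin n) (RatFunc C))ˣ,
      ((T : Matrix (Fin n) (Fin n) (RatFunc C)).map ⇑σ) *
          ((A : Matrix (Fin n) (Fin n) C).map (algebraMap C (RatFunc C))) *
          ((T⁻¹ : (Matrix (Fin n) (Fin n) (RatFunc C))ˣ) : Matrix (Fin n) (Fin n) (RatFunc C)) =
        (S : Matrix (Fin n) (Fin n) C).map (algebraMap C (RatFunc C)) := by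
  classical
  obtain (rfl | ⟨m, rfl⟩) : n = 0 ∨ ∃ m, n = m + 1 := by
    rcases n with _ | m
    · exact Or.inl rfl
    · exact Or.inr ⟨m, rfl⟩
  · exact ⟨1, by ext i j; exact i.elim0⟩
  set f : C →+* RatFunc C := algebraMap C (RatFunc C) with hf
  set F : Matrix (Fin (m + 1)) (Fin (m + 1)) C →+* Matrix (Fin (m + 1)) (Fin (m + 1)) (RatFunc C) :=
    f.mapMatrix with hF
  set Φ : Matrix (Fin (m + 1)) (Fin (m + 1)) (RatFunc C) →+*
      Matrix (Fin (m + 1)) (Fin (m + 1)) (RatFunc C) :=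
    (σ : RatFunc C →+* RatFunc C).mapMatrix with hΦ
  set N : Matrix (Fin (m + 1)) (Fin (m + 1)) (RatFunc C) :=
    F ((U : Matrix (Fin (m + 1)) (Fin (m + 1)) C) - 1) with hNdef
  set D : RatFunc C →+* Matrix (Fin (m + 1)) (Fin (m + 1)) (RatFunc C) :=
    Matrix.scalar (Fin (m + 1)) with hD
  have hDc : ∀ (r : RatFunc C) (X : Matrix (Fin (m + 1)) (Fin (m + 1)) (RatFunc C)),
      Commute (D r) X :=
    fun r X => Matrix.scalar_commute r (fun r' => Commute.all r r') X
  set a : ℕ → RatFunc C := fun k => shiftBico (-RatFunc.X) k with ha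
  set a' : ℕ → RatFunc C := fun k => shiftBico (-RatFunc.X - 1) k with ha'
  set W : Matrix (Fin (m + 1)) (Fin (m + 1)) (RatFunc C) :=
    ∑ k ∈ Finset.range (m + 1), D (a k) * N ^ k with hW
  set W' : Matrix (Fin (m + 1)) (Fin (m + 1)) (RatFunc C) :=
    ∑ k ∈ Finset.range (m + 1), D (a' k) * N ^ k with hW'
  -- N is nilpotent
  have hN : N ^ (m + 1) = 0 := by rw [hNdef, ← map_pow, hunip, map_zero]
  have ha0 : a 0 = 1 := shiftBico_zero _
  have ha'0 : a' 0 = 1 := shiftBico_zero _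
  have hpas : ∀ k, a (k + 1) = a' (k + 1) + a' k := fun k => shiftBico_pascal _ k
  -- behaviour under the entrywise shift automorphism
  have hσa : ∀ k, σ (a k) = a' k := by
    intro k
    rw [ha, ha', shiftBico_map, map_neg, hσ]
    ring_nf
  have hΦN : Φ N = N := by
    rw [hNdef, hΦ, hF, RingHom.mapMatrix_apply, RingHom.mapMatrix_apply, Matrix.map_map]
    ext i j
    simp only [Matrix.map_apply, Function.comp_apply]
    exact σ.commutes _
  have hΦD : ∀ r, Φ (D r) = D (σ r) := by
    intro r
    rw [hΦ, hD, RingHom.mapMatrix_apply]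
    ext i j
    by_cases h : i = j <;>
      simp [Matrix.map_apply, Matrix.scalar_apply, Matrix.diagonal_apply, h]
  have hΦW : Φ W = W' := by
    rw [hW, hW', map_sum]
    refine Finset.sum_congr rfl fun k _ => ?_
    rw [map_mul, map_pow, hΦN, hΦD, hσa]
  -- the top term of the sums vanishes
  have htop : ∀ b : ℕ → RatFunc C, ∑ k ∈ Finset.range (m + 2), D (b k) * N ^ k
      = ∑ k ∈ Finset.range (m + 1), D (b k) * N ^ k := by
    intro b
    rw [Finset.sum_range_succ, hN, mul_zero, add_zero]
  -- the key Pascal identity for the matrix sums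
  have hkey : W' * (1 + N) = W := by
    calc W' * (1 + N)
        = ∑ k ∈ Finset.range (m + 1), (D (a' k) * N ^ k + D (a' k) * N ^ (k + 1)) := by
          rw [hW', Finset.sum_mul]
          refine Finset.sum_congr rfl fun k _ => ?_
          rw [mul_add, mul_one, mul_assoc, ← pow_succ]
      _ = (∑ k ∈ Finset.range (m + 1), D (a' k) * N ^ k)
            + ∑ k ∈ Finset.range (m + 1), D (a' k) * N ^ (k + 1) := Finset.sum_add_distrib
      _ = ((∑ k ∈ Finset.range (m + 1), D (a' (k + 1)) * N ^ (k + 1)) + D (a' 0) * N ^ 0)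
            + ∑ k ∈ Finset.range (m + 1), D (a' k) * N ^ (k + 1) := by
          rw [← htop a', Finset.sum_range_succ']
      _ = (∑ k ∈ Finset.range (m + 1), (D (a' (k + 1)) * N ^ (k + 1) + D (a' k) * N ^ (k + 1)))
            + D (a' 0) * N ^ 0 := by
          rw [Finset.sum_add_distrib]; abel
      _ = (∑ k ∈ Finset.range (m + 1), D (a (k + 1)) * N ^ (k + 1)) + D (a 0) * N ^ 0 := by
          rw [ha0, ha'0]
          congr 1
          refine Finset.sum_congr rfl fun k _ => ?_
          rw [hpas, map_add, add_mul]
      _ = ∑ k ∈ Finset.range (m + 2), D (a k) * N ^ k := by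
          rw [Finset.sum_range_succ' (fun k => D (a k) * N ^ k) (m + 1)]
      _ = W := htop a
  -- S commutes with everything in sight
  have hS : Commute (F (S : Matrix (Fin (m + 1)) (Fin (m + 1)) C)) N := by
    have h1 : (S : Matrix (Fin (m + 1)) (Fin (m + 1)) C) * (U : Matrix (Fin (m + 1)) (Fin (m + 1)) C)
        = (U : Matrix (Fin (m + 1)) (Fin (m + 1)) C) * (S : Matrix (Fin (m + 1)) (Fin (m + 1)) C) := by
      have h2 : S * U = U * S := hSU.symm.trans hUS
      simpa using congrArg Units.val h2
    have h3 : (S : Matrix (Fin (m + 1)) (Fin (m + 1)) C) * ((U : Matrix (Fin (m + 1)) (Fin (m + 1)) C) - 1)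
        = ((U : Matrix (Fin (m + 1)) (Fin (m + 1)) C) - 1) * (S : Matrix (Fin (m + 1)) (Fin (m + 1)) C) := by
      rw [mul_sub, sub_mul, h1, mul_one, one_mul]
    rw [hNdef]
    show F _ * F _ = F _ * F _
    rw [← map_mul, ← map_mul, h3]
  have hSW : ∀ b : ℕ → RatFunc C,
      Commute (F (S : Matrix (Fin (m + 1)) (Fin (m + 1)) C))
        (∑ k ∈ Finset.range (m + 1), D (b k) * N ^ k) := by
    intro b
    refine Commute.sum_right _ _ _ fun k _ => ?_
    exact ((hDc (b k) _).symm).mul_right (hS.pow_right k)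
  -- W is invertible: it is 1 plus a nilpotent matrix
  have hWunit : IsUnit W := by
    have h0 : D (a 0) * N ^ 0 = 1 := by rw [ha0, map_one, pow_zero, mul_one]
    have hsplit : W = 1 + ∑ k ∈ Finset.range m, D (a (k + 1)) * N ^ (k + 1) := by
      rw [hW, Finset.sum_range_succ', h0]
      exact add_comm _ _
    rw [hsplit]
    refine IsNilpotent.isUnit_one_add ?_
    refine Commute.isNilpotent_sum (fun k _ => ?_) ?_
    · refine ⟨m + 1, ?_⟩
      have hle : m + 1 ≤ (k + 1) * (m + 1) := Nat.le_mul_of_pos_left (m + 1) k.succ_pos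
      obtain ⟨c, hc⟩ := Nat.exists_eq_add_of_le hle
      have hz : N ^ ((k + 1) * (m + 1)) = 0 := by rw [hc, pow_add, hN, zero_mul]
      rw [(hDc (a (k + 1)) (N ^ (k + 1))).mul_pow, ← pow_mul, hz, mul_zero]
    · intro i j _ _
      have h1 : Commute (D (a (i + 1))) (D (a (j + 1)) * N ^ (j + 1)) := hDc _ _
      have h2 : Commute (N ^ (i + 1)) (D (a (j + 1)) * N ^ (j + 1)) :=
        ((hDc (a (j + 1)) (N ^ (i + 1))).symm).mul_right
          ((Commute.refl N).pow_pow (i + 1) (j + 1))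
      exact h1.mul_left h2
  -- assemble the gauge transformation
  obtain ⟨T, hT⟩ := hWunit
  refine ⟨T, ?_⟩
  have hU1 : F (U : Matrix (Fin (m + 1)) (Fin (m + 1)) C) = 1 + N := by
    rw [hNdef, map_sub, map_one]
    exact (add_sub_cancel _ _).symm
  have hFA : F (A : Matrix (Fin (m + 1)) (Fin (m + 1)) C)
      = F (S : Matrix (Fin (m + 1)) (Fin (m + 1)) C) * (1 + N) := by
    rw [hSU, Units.val_mul, map_mul, hU1]
  have hmain : W' * F (A : Matrix (Fin (m + 1)) (Fin (m + 1)) C)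
      = F (S : Matrix (Fin (m + 1)) (Fin (m + 1)) C) * W := by
    rw [hFA, ← mul_assoc, ← (hSW a').eq, mul_assoc, hkey]
  have hgoal1 : ((A : Matrix (Fin (m + 1)) (Fin (m + 1)) C).map ⇑f)
      = F (A : Matrix (Fin (m + 1)) (Fin (m + 1)) C) := rfl
  have hgoal2 : ((S : Matrix (Fin (m + 1)) (Fin (m + 1)) C).map ⇑f)
      = F (S : Matrix (Fin (m + 1)) (Fin (m + 1)) C) := rfl
  have hmap : ((T : Matrix (Fin (m + 1)) (Fin (m + 1)) (RatFunc C)).map ⇑σ) = W' := by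
    rw [hT, ← hΦW]; rfl
  rw [hgoal1, hgoal2, hmap, hmain, ← hT, mul_assoc, Units.mul_inv, mul_one]
end

section
/- Let C be an algebraically closed field of characteristic zero, let n, t, p be positive integers, and let H be a subgroup of GL_n(C) containing the group Scal_n(C) of invertible scalar matrices. Suppose there is a group isomorphism φ : H/Scal_n(C) ≅ V × ℤ/tℤ × ℤ/pℤ, where V = (Cˣ)^r × (C, +)^s for some nonnegative integers r, s. Then there exist h_1, h_2 ∈ H with h_1^t = I_n and h_2^p = I_n such that φ(h_1·Scal_n(C)) = (0, 1̄, 0) and φ(h_2·Scal_n(C)) = (0, 0, 1̄), where 1̄ denotes the standard generator of each cyclic factor; moreover, if gcd(n, t, p) = 1, then h_1 and h_2 can be chosen so that in addition h_1 h_2 = h_2 h_1. -/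
/-- The subgroup `Scal_n(C)` of `GL_n(C)` consisting of the invertible scalar matrices
`α·I_n`, `α ∈ Cˣ`. -/
def scalarUnits (n : ℕ) (C : Type*) [Field C] : Subgroup (Matrix (Fin n) (Fin n) C)ˣ :=
  (Units.map ((Matrix.scalar (Fin n) : C →+* Matrix (Fin n) (Fin n) C) :
    C →* Matrix (Fin n) (Fin n) C)).range

theorem scalarUnits_le_center (n : ℕ) (C : Type*) [Field C] :
    scalarUnits n C ≤ Subgroup.center (Matrix (Fin n) (Fin n) C)ˣ := by
  rintro x ⟨α, rfl⟩
  rw [Subgroup.mem_center_iff]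
  intro g
  apply Units.ext
  simp only [Units.val_mul, Units.coe_map, MonoidHom.coe_coe]
  exact ((Matrix.scalar_commute (α : C) (fun r' => mul_comm _ _)
    ((g : Matrix (Fin n) (Fin n) C))).symm).eq

instance scalarUnits_subgroupOf_normal (n : ℕ) (C : Type*) [Field C]
    (H : Subgroup (Matrix (Fin n) (Fin n) C)ˣ) :
    ((scalarUnits n C).subgroupOf H).Normal := by
  refine Subgroup.Normal.subgroupOf ?_ H
  constructor
  intro x hx g
  have hc := Subgroup.mem_center_iff.mp (scalarUnits_le_center n C hx) g
  have hgx : g * x * g⁻¹ = x := by rw [hc, mul_assoc]; simp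
  rwa [hgx]

noncomputable section
variable {C : Type*} [Field C]

def Smap (n : ℕ) (C : Type*) [Field C] : Cˣ →* (Matrix (Fin n) (Fin n) C)ˣ :=
  Units.map ((Matrix.scalar (Fin n) : C →+* Matrix (Fin n) (Fin n) C) :
    C →* Matrix (Fin n) (Fin n) C)

lemma Smap_mem (n : ℕ) (β : Cˣ) : Smap n C β ∈ scalarUnits n C := ⟨β, rfl⟩

lemma Smap_commute (n : ℕ) (β : Cˣ) (g : (Matrix (Fin n) (Fin n) C)ˣ) :
    Commute (Smap n C β) g :=
  (Subgroup.mem_center_iff.mp (scalarUnits_le_center n C (Smap_mem n β)) g).symm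

lemma Smap_injective (n : ℕ) (hn : 0 < n) : Function.Injective (Smap n C) := by
  intro a b hab
  have : (Matrix.scalar (Fin n)) (a : C) = (Matrix.scalar (Fin n)) (b : C) :=
    congrArg Units.val hab
  have hne : Nonempty (Fin n) := ⟨⟨0, hn⟩⟩
  exact Units.ext ((Matrix.scalar_inj).mp this)

lemma mem_scalarUnits_iff (n : ℕ) (x : (Matrix (Fin n) (Fin n) C)ˣ) :
    x ∈ scalarUnits n C ↔ ∃ β : Cˣ, Smap n C β = x := Iff.rfl

-- root extraction
lemma exists_units_pow_eq [IsAlgClosed C] (k : ℕ) (hk : 0 < k) (α : Cˣ) :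
    ∃ β : Cˣ, β ^ k = α := by
  obtain ⟨b, hb⟩ := IsAlgClosed.exists_pow_nat_eq (α : C) hk
  have hb0 : b ≠ 0 := by
    intro h; rw [h, zero_pow hk.ne'] at hb; exact α.ne_zero hb.symm
  exact ⟨Units.mk0 b hb0, Units.ext (by simpa using hb)⟩

-- key lifting lemma
lemma lift_of_pow_mem [IsAlgClosed C] (n k : ℕ) (hn : 0 < n) (hk : 0 < k)
    (H : Subgroup (Matrix (Fin n) (Fin n) C)ˣ) (hscal : scalarUnits n C ≤ H)
    (g : H)
    (hg : (QuotientGroup.mk g : H ⧸ (scalarUnits n C).subgroupOf H) ^ k = 1) :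
    ∃ (h : (Matrix (Fin n) (Fin n) C)ˣ) (mh : h ∈ H), h ^ k = 1 ∧
      (QuotientGroup.mk ⟨h, mh⟩ : H ⧸ (scalarUnits n C).subgroupOf H) =
        QuotientGroup.mk g := by
  have hgk : g ^ k ∈ (scalarUnits n C).subgroupOf H := by
    rw [← QuotientGroup.eq_one_iff]
    simpa using hg
  rw [Subgroup.mem_subgroupOf] at hgk
  obtain ⟨α, hα⟩ := hgk
  obtain ⟨β, hβ⟩ := exists_units_pow_eq k hk α
  have mh : (Smap n C β)⁻¹ * (g : (Matrix (Fin n) (Fin n) C)ˣ) ∈ H :=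
    H.mul_mem (H.inv_mem (hscal (Smap_mem n β))) g.2
  refine ⟨(Smap n C β)⁻¹ * (g : (Matrix (Fin n) (Fin n) C)ˣ), mh, ?_, ?_⟩
  · have hcomm : Commute ((Smap n C β)⁻¹) (g : (Matrix (Fin n) (Fin n) C)ˣ) :=
      (Smap_commute n β _).inv_left
    rw [hcomm.mul_pow, inv_pow, ← map_pow, hβ]
    have : (g : (Matrix (Fin n) (Fin n) C)ˣ) ^ k = Smap n C α := hα.symm
    rw [this, inv_mul_cancel]
  · rw [QuotientGroup.eq]
    rw [Subgroup.mem_subgroupOf]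
    have : ((⟨(Smap n C β)⁻¹ * ↑g, mh⟩ : H)⁻¹ * g :
        (Matrix (Fin n) (Fin n) C)ˣ) = Smap n C β := by
      simp only [Subgroup.coe_mul, Subgroup.coe_inv, mul_inv_rev, inv_inv]
      rw [mul_assoc, (Smap_commute n β (g : (Matrix (Fin n) (Fin n) C)ˣ)).eq,
        inv_mul_cancel_left]
    rw [Subgroup.coe_mul, this]
    exact Smap_mem n β
end

lemma comm_grp_commutator {G : Type*} [CommGroup G] (a b : G) :
    a * b * a⁻¹ * b⁻¹ = 1 := by rw [mul_comm a b]; group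

lemma ofAdd_one_pow_self (t : ℕ) : (Multiplicative.ofAdd (1 : ZMod t)) ^ t = 1 := by
  rw [← ofAdd_nsmul]
  simp
/-- Lemma 4.7 (partial lifts): if `H ≤ GL_n(C)` contains the scalars and
`H/Scal_n(C) ≅ V × ℤ/tℤ × ℤ/pℤ` with `V = (Cˣ)^r × (C,+)^s`, then the standard generators of
the two cyclic factors lift to elements `h₁, h₂ ∈ H` with `h₁^t = 1` and `h₂^p = 1`;
moreover if `gcd(n,t,p) = 1` the lifts can be chosen to commute. -/
theorem lift_cyclic_generators {C : Type*} [Field C] [IsAlgClosed C] [CharZero C]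
    (n t p : ℕ) (hn : 0 < n) (ht : 0 < t) (hp : 0 < p) (r s : ℕ)
    (H : Subgroup (Matrix (Fin n) (Fin n) C)ˣ) (hscal : scalarUnits n C ≤ H)
    (φ : H ⧸ (scalarUnits n C).subgroupOf H ≃*
      ((Fin r → Cˣ) × (Fin s → Multiplicative C)) ×
        Multiplicative (ZMod t) × Multiplicative (ZMod p)) :
    ∃ (h1 h2 : (Matrix (Fin n) (Fin n) C)ˣ) (m1 : h1 ∈ H) (m2 : h2 ∈ H),
      h1 ^ t = 1 ∧ h2 ^ p = 1 ∧
      φ (QuotientGroup.mk ⟨h1, m1⟩) = (1, Multiplicative.ofAdd (1 : ZMod t), 1) ∧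
      φ (QuotientGroup.mk ⟨h2, m2⟩) = (1, 1, Multiplicative.ofAdd (1 : ZMod p)) ∧
      (Nat.gcd n (Nat.gcd t p) = 1 → h1 * h2 = h2 * h1) := by
  obtain ⟨g₁, hg₁⟩ := QuotientGroup.mk_surjective
    (φ.symm (1, Multiplicative.ofAdd (1 : ZMod t), 1))
  obtain ⟨g₂, hg₂⟩ := QuotientGroup.mk_surjective
    (φ.symm (1, 1, Multiplicative.ofAdd (1 : ZMod p)))
  have hφg₁ : φ (QuotientGroup.mk g₁) = (1, Multiplicative.ofAdd (1 : ZMod t), 1) := by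
    rw [hg₁, φ.apply_symm_apply]
  have hφg₂ : φ (QuotientGroup.mk g₂) = (1, 1, Multiplicative.ofAdd (1 : ZMod p)) := by
    rw [hg₂, φ.apply_symm_apply]
  have hq₁ : (QuotientGroup.mk g₁ : H ⧸ (scalarUnits n C).subgroupOf H) ^ t = 1 := by
    apply φ.injective
    rw [map_pow, hφg₁, map_one φ]
    simp only [Prod.pow_mk, one_pow, ofAdd_one_pow_self]
    rfl
  have hq₂ : (QuotientGroup.mk g₂ : H ⧸ (scalarUnits n C).subgroupOf H) ^ p = 1 := by
    apply φ.injective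
    rw [map_pow, hφg₂, map_one φ]
    simp only [Prod.pow_mk, one_pow, ofAdd_one_pow_self]
    rfl
  obtain ⟨h1, m1, hh1t, hmk1⟩ := lift_of_pow_mem n t hn ht H hscal g₁ hq₁
  obtain ⟨h2, m2, hh2p, hmk2⟩ := lift_of_pow_mem n p hn hp H hscal g₂ hq₂
  have hφ1 : φ (QuotientGroup.mk ⟨h1, m1⟩) = (1, Multiplicative.ofAdd (1 : ZMod t), 1) := by
    rw [hmk1, hφg₁]
  have hφ2 : φ (QuotientGroup.mk ⟨h2, m2⟩) = (1, 1, Multiplicative.ofAdd (1 : ZMod p)) := by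
    rw [hmk2, hφg₂]
  refine ⟨h1, h2, m1, m2, hh1t, hh2p, hφ1, hφ2, ?_⟩
  intro hgcd
  -- the commutator lies in the scalars
  have hcmem : ((⟨h1, m1⟩ * ⟨h2, m2⟩ * (⟨h1, m1⟩ : H)⁻¹ * (⟨h2, m2⟩ : H)⁻¹ : H)) ∈
      (scalarUnits n C).subgroupOf H := by
    rw [← QuotientGroup.eq_one_iff]
    apply φ.injective
    rw [map_one]
    push_cast [QuotientGroup.mk_mul, QuotientGroup.mk_inv]
    rw [map_mul, map_mul, map_mul, map_inv, map_inv, hφ1, hφ2]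
    exact comm_grp_commutator _ _
  rw [Subgroup.mem_subgroupOf] at hcmem
  obtain ⟨γ, hγ⟩ := hcmem
  have hγdef : Smap n C γ = h1 * h2 * h1⁻¹ * h2⁻¹ := hγ
  -- γ ^ p = 1
  have hγp : γ ^ p = 1 := by
    apply Smap_injective n hn
    rw [map_one]
    have e1 : h1 * h2 * h1⁻¹ = Smap n C γ * h2 := by rw [hγdef]; group
    have e2 : (h1 * h2 * h1⁻¹) ^ p = 1 := by
      have : h1 * h2 * h1⁻¹ = (MulAut.conj h1) h2 := rfl
      rw [this, ← map_pow, hh2p, map_one]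
    rw [e1, (Smap_commute n γ h2).mul_pow, ← map_pow, hh2p, mul_one] at e2
    exact e2
  -- γ ^ t = 1
  have hγt : γ ^ t = 1 := by
    apply Smap_injective n hn
    rw [map_one]
    have e1 : h2 * h1 * h2⁻¹ = (Smap n C γ)⁻¹ * h1 := by rw [hγdef]; group
    have e2 : (h2 * h1 * h2⁻¹) ^ t = 1 := by
      have : h2 * h1 * h2⁻¹ = (MulAut.conj h2) h1 := rfl
      rw [this, ← map_pow, hh1t, map_one]
    rw [e1, ((Smap_commute n γ h1).inv_left).mul_pow, inv_pow, ← map_pow, hh1t,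
      mul_one, inv_eq_one] at e2
    exact e2
  -- γ ^ n = 1 via determinant
  have hγn : γ ^ n = 1 := by
    set D : (Matrix (Fin n) (Fin n) C)ˣ →* Cˣ :=
      Units.map (Matrix.detMonoidHom : Matrix (Fin n) (Fin n) C →* C)
    have hD1 : D (Smap n C γ) = 1 := by
      rw [hγdef, map_mul, map_mul, map_mul, map_inv, map_inv]
      exact comm_grp_commutator _ _
    have hDγ : D (Smap n C γ) = γ ^ n := by
      apply Units.ext
      simp [D, Smap, Matrix.detMonoidHom, Matrix.det_smul]
    rw [hDγ] at hD1
    exact hD1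
  -- conclude γ = 1
  have hγ1 : γ = 1 := by
    have h1' : orderOf γ ∣ Nat.gcd n (Nat.gcd t p) :=
      Nat.dvd_gcd (orderOf_dvd_of_pow_eq_one hγn)
        (Nat.dvd_gcd (orderOf_dvd_of_pow_eq_one hγt) (orderOf_dvd_of_pow_eq_one hγp))
    rw [hgcd, Nat.dvd_one] at h1'
    exact orderOf_eq_one_iff.mp h1'
  have : h1 * h2 * h1⁻¹ * h2⁻¹ = 1 := by rw [← hγdef, hγ1, map_one]
  have := commutatorElement_eq_one_iff_mul_comm.mp (by simpa [commutatorElement_def] using this)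
  exact this
end
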